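/- Pointers to owned addresses held by other threads or shared variables are invalid: let τ ∈ mmsem(P) and let p be a pointer variable with heap(τ)(p) ∈ owned(t, τ); if p is a shared variable or p is local to a thread t' ≠ t, then p ∉ valid(τ). -/

import Mathlib

/-!
A formalization of the framework of Haziza, Holík, Meyer, Wolff,
"Pointer Race Freedom": heaps, concurrent heap-manipulating programs,
the garbage-collected, memory-managed and ownership-respecting semantics,
validity of pointers, (strong) pointer races, and ownership.
-/

namespace PRF

open scoped Classical

noncomputable section

/-- Pointer expressions over addresses `A`, pointer variables `PV`,
with `n` next-selectors. -/
inductive PExp (A PV : Type) (n : ℕ) : Type where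
  | var  : PV → PExp A PV n
  | next : A → Fin n → PExp A PV n

/-- Data expressions over addresses `A` and data variables `DV`. -/
inductive DExp (A DV : Type) : Type where
  | var  : DV → DExp A DV
  | data : A → DExp A DV

/-- Conditions of assert commands: (negated) equalities of pointer or
data variables. -/
inductive Cond (PV DV : Type) : Type where
  | peq : PV → PV → Cond PV DV
  | deq : DV → DV → Cond PV DV
  | not : Cond PV DV → Cond PV DV

/-- Commands of the while-language. -/
inductive Com (D PV DV : Type) (n : ℕ) : Type where
  | assert    : Cond PV DV → Com D PV DV n
  | malloc    : PV → Com D PV DV n                   -- p := malloc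
  | free      : PV → Com D PV DV n                   -- free(p)
  | readNext  : PV → PV → Fin n → Com D PV DV n      -- p := q.next_i
  | writeNext : PV → Fin n → PV → Com D PV DV n      -- p.next_i := q
  | copyP     : PV → PV → Com D PV DV n              -- p := q
  | readData  : DV → PV → Com D PV DV n              -- x := q.data
  | writeData : PV → DV → Com D PV DV n              -- p.data := x
  | opAsgn    : DV → List DV → (List D → D) → Com D PV DV n  -- x := op(x1,…,xk)

/-- A heap: partial valuations of pointer and data expressions. -/
structure Heap (A D PV DV : Type) (n : ℕ) : Type where
  pval : PExp A PV n → Option A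
  dval : DExp A DV → Option D

/-- An update of a heap (applied by overriding where defined). -/
structure Update (A D PV DV : Type) (n : ℕ) : Type where
  pup : PExp A PV n → Option A
  dup : DExp A DV → Option D

/-- An action: an optional (thread, command) pair — `none` only for the
initial base action — together with an update. -/
structure Act (A D PV DV T : Type) (n : ℕ) : Type where
  tc : Option (T × Com D PV DV n)
  up : Update A D PV DV n

/-- The complement of an assert condition. -/
def Cond.negate {PV DV : Type} : Cond PV DV → Cond PV DV
  | .not b => b
  | b => .not b

/-- Pointer variables occurring in a condition. -/
def Cond.pvars {PV DV : Type} : Cond PV DV → Set PV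
  | .peq p q => {p, q}
  | .deq _ _ => ∅
  | .not b => b.pvars

/-- Data variables occurring in a condition. -/
def Cond.dvars {PV DV : Type} : Cond PV DV → Set DV
  | .peq _ _ => ∅
  | .deq x y => {x, y}
  | .not b => b.dvars

/-- Pointer variables used by a command. -/
def Com.pvars {D PV DV : Type} {n : ℕ} : Com D PV DV n → Set PV
  | .assert b => b.pvars
  | .malloc p => {p}
  | .free p => {p}
  | .readNext p q _ => {p, q}
  | .writeNext p _ q => {p, q}
  | .copyP p q => {p, q}
  | .readData _ q => {q}
  | .writeData p _ => {p}
  | .opAsgn _ _ _ => ∅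

/-- Data variables used by a command. -/
def Com.dvars {D PV DV : Type} {n : ℕ} : Com D PV DV n → Set DV
  | .assert b => b.dvars
  | .readData x _ => {x}
  | .writeData _ x => {x}
  | .opAsgn x ys _ => {x} ∪ {y | y ∈ ys}
  | _ => ∅

/-- A concurrent heap-manipulating program: a set of threads `T`, each an
ordinary while-program presented by its control-flow relation `step`;
every variable is shared (`owner = none`) or local to one thread, a thread
uses only shared variables and its own locals, and every control location
offering `assert b` also offers `assert ¬b`. -/
structure Program (D PV DV T : Type) (n : ℕ) : Type 1 where
  Ctrl : Type
  init : T → Ctrl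
  step : T → Ctrl → Com D PV DV n → Ctrl → Prop
  pOwner : PV → Option T
  dOwner : DV → Option T
  assertCompl : ∀ t c b c', step t c (.assert b) c' →
    ∃ c'', step t c (.assert b.negate) c''
  stepPVars : ∀ t c com c', step t c com c' →
    ∀ p ∈ Com.pvars com, pOwner p = none ∨ pOwner p = some t
  stepDVars : ∀ t c com c', step t c com c' →
    ∀ x ∈ Com.dvars com, dOwner x = none ∨ dOwner x = some t

variable {A D PV DV T : Type} {n : ℕ}

/-- The source address of a pointer expression (`a` for `a.next_i`). -/
def PExp.srcAdr : PExp A PV n → Option A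
  | .var _ => none
  | .next a _ => some a

/-- The source address of a data expression (`a` for `a.data`). -/
def DExp.srcAdr : DExp A DV → Option A
  | .var _ => none
  | .data a => some a

/-- The addresses in use in a heap: those occurring in the domain or range
of the pointer valuation or in the domain of the data valuation. -/
def Heap.adr (h : Heap A D PV DV n) : Set A :=
  {a | (∃ pe, h.pval pe ≠ none ∧ PExp.srcAdr pe = some a)
     ∨ (∃ pe, h.pval pe = some a)
     ∨ (∃ de, h.dval de ≠ none ∧ DExp.srcAdr de = some a)}

/-- Restriction `h|P` of a heap to a set `P` of pointer expressions: keeps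
`pval` only on `P`, keeps `dval` on data variables and on `a.data` for the
addresses `a` hit by some pointer expression in `P`. -/
def Heap.restrict (h : Heap A D PV DV n) (P : Set (PExp A PV n)) :
    Heap A D PV DV n where
  pval pe := if pe ∈ P then h.pval pe else none
  dval de := match de with
    | .var x => h.dval (.var x)
    | .data a => if ∃ pe ∈ P, h.pval pe = some a then h.dval (.data a) else none

/-- Applying an update to a heap. -/
def Heap.apply (h : Heap A D PV DV n) (u : Update A D PV DV n) :
    Heap A D PV DV n where
  pval pe := match u.pup pe with | some a => some a | none => h.pval pe
  dval de := match u.dup de with | some d => some d | none => h.dval de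

/-- The totally undefined heap. -/
def Heap.empty : Heap A D PV DV n := ⟨fun _ => none, fun _ => none⟩

/-- `h[pe ↦ a]`. -/
def Heap.pupdate (h : Heap A D PV DV n) (pe : PExp A PV n) (a : A) :
    Heap A D PV DV n :=
  ⟨fun pe' => if pe' = pe then some a else h.pval pe', h.dval⟩

/-- `h[de ↦ d]`. -/
def Heap.dupdate (h : Heap A D PV DV n) (de : DExp A DV) (d : D) :
    Heap A D PV DV n :=
  ⟨h.pval, fun de' => if de' = de then some d else h.dval de'⟩

/-- The domain of the pointer valuation. -/
def Heap.pdom (h : Heap A D PV DV n) : Set (PExp A PV n) := {pe | h.pval pe ≠ none}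

/-- The domain of the data valuation. -/
def Heap.ddom (h : Heap A D PV DV n) : Set (DExp A DV) := {de | h.dval de ≠ none}

/-- heap(τ): the heap resulting from a computation. -/
def heapOf (τ : List (Act A D PV DV T n)) : Heap A D PV DV n :=
  τ.foldl (fun h act => h.apply act.up) Heap.empty

/-- The empty update. -/
def Update.empty : Update A D PV DV n := ⟨fun _ => none, fun _ => none⟩

/-- The singleton pointer update `[pe ↦ a]`. -/
def Update.pt (pe : PExp A PV n) (a : A) : Update A D PV DV n :=
  ⟨fun pe' => if pe' = pe then some a else none, fun _ => none⟩

/-- The singleton data update `[de ↦ d]`. -/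
def Update.dt (de : DExp A DV) (d : D) : Update A D PV DV n :=
  ⟨fun _ => none, fun de' => if de' = de then some d else none⟩

/-- The update of rule (Malloc1): `[p ↦ a, a.data ↦ d, a.next_i ↦ seg]`. -/
def mallocUpdate (seg : A) (p : PV) (a : A) (d : D) : Update A D PV DV n :=
  ⟨fun pe => if pe = PExp.var p then some a
             else if ∃ i, pe = PExp.next a i then some seg else none,
   fun de => if de = DExp.data a then some d else none⟩

/-- The update of the base action: every pointer variable is set to `seg`,
every data variable to an arbitrary initial value. -/
def baseUpdate (seg : A) (dinit : DV → D) : Update A D PV DV n :=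
  ⟨fun pe => match pe with | .var _ => some seg | _ => none,
   fun de => match de with | .var x => some (dinit x) | _ => none⟩

/-- Satisfaction of a condition (with polarity); an assertion and its
negation both pass when an involved pointer holds `seg`. -/
def condSat (seg : A) (h : Heap A D PV DV n) : Bool → Cond PV DV → Prop
  | pol, .not b => condSat seg h (!pol) b
  | pol, .peq p q =>
      (if pol then h.pval (.var p) = h.pval (.var q)
       else h.pval (.var p) ≠ h.pval (.var q))
      ∨ h.pval (.var p) = some seg ∨ h.pval (.var q) = some seg
  | pol, .deq x y =>
      if pol then h.dval (.var x) = h.dval (.var y)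
      else h.dval (.var x) ≠ h.dval (.var y)

/-- One step of the freed-addresses bookkeeping. -/
def freedStep (seg : A) (h : Heap A D PV DV n) (F : Set A)
    (act : Act A D PV DV T n) : Set A :=
  match act.tc with
  | some (_, .free p) =>
      match h.pval (.var p) with
      | some a => if a = seg then F else insert a F
      | none => F
  | some (_, .malloc p) =>
      match act.up.pup (.var p) with
      | some a => F \ {a}
      | none => F
  | _ => F

def freedAux (seg : A) : Heap A D PV DV n → Set A → List (Act A D PV DV T n) → Set A
  | _, F, [] => F
  | h, F, act :: τ => freedAux seg (h.apply act.up) (freedStep seg h F act) τ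

/-- freed(τ): addresses freed and not re-allocated since. -/
def freedOf (seg : A) (τ : List (Act A D PV DV T n)) : Set A :=
  freedAux seg Heap.empty ∅ τ

/-- invalid(a): the pointer expressions invalidated by freeing `a`. -/
def invalidOf (h : Heap A D PV DV n) (a : A) : Set (PExp A PV n) :=
  {pe | h.pval pe = some a} ∪ {pe | ∃ i, pe = PExp.next a i}

/-- One step of the validity bookkeeping. -/
def validStep (seg : A) (h : Heap A D PV DV n) (V : Set (PExp A PV n))
    (act : Act A D PV DV T n) : Set (PExp A PV n) :=
  match act.tc with
  | some (_, .free p) =>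
      match h.pval (.var p) with
      | some a => if a = seg then V else V \ invalidOf h a
      | none => V
  | some (_, .copyP p q) =>
      if PExp.var q ∈ V then insert (PExp.var p) V else V \ {PExp.var p}
  | some (_, .readNext p q i) =>
      match h.pval (.var q) with
      | some a => if PExp.next a i ∈ V then insert (PExp.var p) V else V \ {PExp.var p}
      | none => V \ {PExp.var p}
  | some (_, .writeNext p i q) =>
      match h.pval (.var p) with
      | some a => if PExp.var q ∈ V then insert (PExp.next a i) V else V \ {PExp.next a i}
      | none => V
  | some (_, .malloc p) =>
      match act.up.pup (.var p) with
      | some a =>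
          insert (PExp.var p) V ∪
            {pe | ∃ i, pe = PExp.next a i ∧ act.up.pup (PExp.next a i) ≠ none}
      | none => V
  | _ => V

def validAux (seg : A) : Heap A D PV DV n → Set (PExp A PV n) →
    List (Act A D PV DV T n) → Set (PExp A PV n)
  | _, V, [] => V
  | h, V, act :: τ => validAux seg (h.apply act.up) (validStep seg h V act) τ

/-- valid(τ): the valid pointer expressions after a computation; initially
all pointer variables are valid. -/
def validOf (seg : A) (τ : List (Act A D PV DV T n)) : Set (PExp A PV n) :=
  validAux seg Heap.empty {pe | ∃ p, pe = PExp.var p} τ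

/-- One step of the strong-invalidity bookkeeping: a variable becomes
strongly invalid when its value is obtained by dereferencing an invalid
pointer; strong invalidity is propagated by assignments. -/
def sinvStep (h : Heap A D PV DV n) (V : Set (PExp A PV n)) (S : Set (PV ⊕ DV))
    (act : Act A D PV DV T n) : Set (PV ⊕ DV) :=
  match act.tc with
  | some (_, .readNext p q _) =>
      if PExp.var q ∈ V then S \ {Sum.inl p} else insert (Sum.inl p) S
  | some (_, .readData x q) =>
      if PExp.var q ∈ V then S \ {Sum.inr x} else insert (Sum.inr x) S
  | some (_, .copyP p q) =>
      if Sum.inl q ∈ S then insert (Sum.inl p) S else S \ {Sum.inl p}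
  | some (_, .opAsgn x ys _) =>
      if ∃ y ∈ ys, Sum.inr y ∈ S then insert (Sum.inr x) S else S \ {Sum.inr x}
  | some (_, .malloc p) => S \ {Sum.inl p}
  | _ => S

def sinvAux (seg : A) : Heap A D PV DV n → Set (PExp A PV n) → Set (PV ⊕ DV) →
    List (Act A D PV DV T n) → Set (PV ⊕ DV)
  | _, _, S, [] => S
  | h, V, S, act :: τ =>
      sinvAux seg (h.apply act.up) (validStep seg h V act) (sinvStep h V S act) τ

/-- The strongly invalid variables after a computation. -/
def sinvOf (seg : A) (τ : List (Act A D PV DV T n)) : Set (PV ⊕ DV) :=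
  sinvAux seg Heap.empty {pe | ∃ p, pe = PExp.var p} ∅ τ

/-- An assignment command publishes the owned address `a` if it copies `a`
via a valid pointer into a shared variable, a variable of another thread,
or into the heap outside the owner's cells. -/
def publishedBy (P : Program D PV DV T n) (h : Heap A D PV DV n)
    (V : Set (PExp A PV n)) (W : A → Option T) (com : Com D PV DV n) (a : A) :
    Prop :=
  ∃ t', W a = some t' ∧
    ((∃ p q, com = .copyP p q ∧ PExp.var q ∈ V ∧ h.pval (.var q) = some a ∧
        P.pOwner p ≠ some t')
     ∨ (∃ p q i b, com = .readNext p q i ∧ h.pval (.var q) = some b ∧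
        PExp.next b i ∈ V ∧ h.pval (.next b i) = some a ∧ P.pOwner p ≠ some t')
     ∨ (∃ p i q b, com = .writeNext p i q ∧ PExp.var q ∈ V ∧
        h.pval (.var q) = some a ∧ h.pval (.var p) = some b ∧ W b ≠ some t'))

/-- One step of the ownership bookkeeping: a thread owns an address it
allocated (into one of its local variables) by the most recent allocation,
until the address is freed or published. -/
def ownedStep (seg : A) (P : Program D PV DV T n) (h : Heap A D PV DV n)
    (V : Set (PExp A PV n)) (W : A → Option T) (act : Act A D PV DV T n) :
    A → Option T := fun a =>
  match act.tc with
  | some (t, .malloc p) =>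
      match act.up.pup (.var p) with
      | some b => if a = b then (if P.pOwner p = some t then some t else none) else W a
      | none => W a
  | some (_, .free p) =>
      match h.pval (.var p) with
      | some b => if a = b ∧ b ≠ seg then none else W a
      | none => W a
  | some (_, com) => if publishedBy P h V W com a then none else W a
  | none => W a

def ownedAux (seg : A) (P : Program D PV DV T n) :
    Heap A D PV DV n → Set (PExp A PV n) → (A → Option T) →
      List (Act A D PV DV T n) → (A → Option T)
  | _, _, W, [] => W
  | h, V, W, act :: τ =>
      ownedAux seg P (h.apply act.up) (validStep seg h V act)
        (ownedStep seg P h V W act) τ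

/-- owned(·, τ) as a map from addresses to their owning thread, if any. -/
def ownedOf (seg : A) (P : Program D PV DV T n) (τ : List (Act A D PV DV T n)) :
    A → Option T :=
  ownedAux seg P Heap.empty {pe | ∃ p, pe = PExp.var p} (fun _ => none) τ

/-- The operational semantics: `mm = false` gives the garbage-collected
semantics (only rule (Malloc1)), `mm = true` additionally enables (Malloc2). -/
inductive Sem (seg : A) (P : Program D PV DV T n) (mm : Bool) :
    List (Act A D PV DV T n) → (T → P.Ctrl) → Prop where
  | base (dinit : DV → D) :
      Sem seg P mm [⟨none, baseUpdate seg dinit⟩] P.init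
  | assert {τ ctrl} (t : T) (b : Cond PV DV) (c' : P.Ctrl) :
      Sem seg P mm τ ctrl →
      P.step t (ctrl t) (.assert b) c' →
      condSat seg (heapOf τ) true b →
      Sem seg P mm (τ ++ [⟨some (t, .assert b), Update.empty⟩])
        (Function.update ctrl t c')
  | free {τ ctrl} (t : T) (p : PV) (c' : P.Ctrl) :
      Sem seg P mm τ ctrl →
      P.step t (ctrl t) (.free p) c' →
      Sem seg P mm (τ ++ [⟨some (t, .free p), Update.empty⟩])
        (Function.update ctrl t c')
  | copyP {τ ctrl} (t : T) (p q : PV) (c' : P.Ctrl) (b : A) :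
      Sem seg P mm τ ctrl →
      P.step t (ctrl t) (.copyP p q) c' →
      (heapOf τ).pval (.var q) = some b →
      Sem seg P mm (τ ++ [⟨some (t, .copyP p q), Update.pt (.var p) b⟩])
        (Function.update ctrl t c')
  | readNext {τ ctrl} (t : T) (p q : PV) (i : Fin n) (c' : P.Ctrl) (a b : A) :
      Sem seg P mm τ ctrl →
      P.step t (ctrl t) (.readNext p q i) c' →
      (heapOf τ).pval (.var q) = some a → a ≠ seg →
      (heapOf τ).pval (.next a i) = some b →
      Sem seg P mm (τ ++ [⟨some (t, .readNext p q i), Update.pt (.var p) b⟩])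
        (Function.update ctrl t c')
  | writeNext {τ ctrl} (t : T) (p : PV) (i : Fin n) (q : PV) (c' : P.Ctrl) (a b : A) :
      Sem seg P mm τ ctrl →
      P.step t (ctrl t) (.writeNext p i q) c' →
      (heapOf τ).pval (.var p) = some a → a ≠ seg →
      (heapOf τ).pval (.var q) = some b →
      Sem seg P mm (τ ++ [⟨some (t, .writeNext p i q), Update.pt (.next a i) b⟩])
        (Function.update ctrl t c')
  | readData {τ ctrl} (t : T) (x : DV) (q : PV) (c' : P.Ctrl) (a : A) (d : D) :
      Sem seg P mm τ ctrl →
      P.step t (ctrl t) (.readData x q) c' →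
      (heapOf τ).pval (.var q) = some a → a ≠ seg →
      (heapOf τ).dval (.data a) = some d →
      Sem seg P mm (τ ++ [⟨some (t, .readData x q), Update.dt (.var x) d⟩])
        (Function.update ctrl t c')
  | writeData {τ ctrl} (t : T) (q : PV) (x : DV) (c' : P.Ctrl) (a : A) (d : D) :
      Sem seg P mm τ ctrl →
      P.step t (ctrl t) (.writeData q x) c' →
      (heapOf τ).pval (.var q) = some a → a ≠ seg →
      (heapOf τ).dval (.var x) = some d →
      Sem seg P mm (τ ++ [⟨some (t, .writeData q x), Update.dt (.data a) d⟩])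
        (Function.update ctrl t c')
  | opAsgn {τ ctrl} (t : T) (x : DV) (ys : List DV) (op : List D → D)
      (c' : P.Ctrl) (ds : List D) :
      Sem seg P mm τ ctrl →
      P.step t (ctrl t) (.opAsgn x ys op) c' →
      ys.mapM (fun y => (heapOf τ).dval (.var y)) = some ds →
      Sem seg P mm (τ ++ [⟨some (t, .opAsgn x ys op), Update.dt (.var x) (op ds)⟩])
        (Function.update ctrl t c')
  | malloc1 {τ ctrl} (t : T) (p : PV) (c' : P.Ctrl) (a : A) (d : D) :
      Sem seg P mm τ ctrl →
      P.step t (ctrl t) (.malloc p) c' →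
      a ∉ (heapOf τ).adr →
      Sem seg P mm (τ ++ [⟨some (t, .malloc p), mallocUpdate seg p a d⟩])
        (Function.update ctrl t c')
  | malloc2 {τ ctrl} (t : T) (p : PV) (c' : P.Ctrl) (a : A) :
      mm = true →
      Sem seg P mm τ ctrl →
      P.step t (ctrl t) (.malloc p) c' →
      a ∈ freedOf seg τ →
      Sem seg P mm (τ ++ [⟨some (t, .malloc p), Update.pt (.var p) a⟩])
        (Function.update ctrl t c')

/-- The garbage-collected semantics gcsem(P). -/
def gcsem (seg : A) (P : Program D PV DV T n) : Set (List (Act A D PV DV T n)) :=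
  {τ | ∃ ctrl, Sem seg P false τ ctrl}

/-- The memory-managed semantics mmsem(P). -/
def mmsem (seg : A) (P : Program D PV DV T n) : Set (List (Act A D PV DV T n)) :=
  {τ | ∃ ctrl, Sem seg P true τ ctrl}

/-- The pointer variables a command frees, dereferences, or uses in an
assertion. -/
def racyVars {D PV DV : Type} {n : ℕ} : Com D PV DV n → Set PV
  | .free p => {p}
  | .readNext _ q _ => {q}
  | .writeNext p _ _ => {p}
  | .readData _ q => {q}
  | .writeData p _ => {p}
  | .assert b => b.pvars
  | _ => ∅

/-- The action `act` raises a pointer race after `τ`. -/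
def isPRStep (seg : A) (τ : List (Act A D PV DV T n)) (act : Act A D PV DV T n) :
    Prop :=
  ∃ t com, act.tc = some (t, com) ∧ ∃ p ∈ racyVars com, PExp.var p ∉ validOf seg τ

/-- The computation `σ` is a pointer race. -/
def isPR (seg : A) (σ : List (Act A D PV DV T n)) : Prop :=
  ∃ τ act, σ = τ ++ [act] ∧ isPRStep seg τ act

/-- A set of computations is PRF if it contains no pointer race. -/
def SetPRF (seg : A) (S : Set (List (Act A D PV DV T n))) : Prop :=
  ∀ σ ∈ S, ¬ isPR seg σ

/-- A computation is PRF if none of its prefixes is a pointer race. -/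
def CompPRF (seg : A) (τ : List (Act A D PV DV T n)) : Prop :=
  ∀ σ, σ <+: τ → ¬ isPR seg σ

/-- The action `act` raises a strong pointer race after `τ`. -/
def isSPRStep (seg : A) (τ : List (Act A D PV DV T n)) (act : Act A D PV DV T n) :
    Prop :=
  ∃ t com, act.tc = some (t, com) ∧
    ((∃ p : PV,
        (com = .free p ∨ (∃ i q, com = .writeNext p i q) ∨ (∃ x, com = .writeData p x)) ∧
        PExp.var p ∉ validOf seg τ)
     ∨ (∃ q : PV,
        ((∃ p i, com = .readNext p q i) ∨ (∃ x, com = .readData x q)) ∧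
        Sum.inl q ∈ sinvOf seg τ)
     ∨ (∃ b, com = .assert b ∧
        ((∃ p ∈ Cond.pvars b, Sum.inl p ∈ sinvOf seg τ)
         ∨ (∃ x ∈ Cond.dvars b, Sum.inr x ∈ sinvOf seg τ))))

/-- The computation `σ` is a strong pointer race. -/
def isSPR (seg : A) (σ : List (Act A D PV DV T n)) : Prop :=
  ∃ τ act, σ = τ ++ [act] ∧ isSPRStep seg τ act

/-- A set of computations is SPRF if it contains no strong pointer race. -/
def SetSPRF (seg : A) (S : Set (List (Act A D PV DV T n))) : Prop :=
  ∀ σ ∈ S, ¬ isSPR seg σ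

/-- A computation is SPRF if none of its prefixes is a strong pointer race. -/
def CompSPRF (seg : A) (τ : List (Act A D PV DV T n)) : Prop :=
  ∀ σ, σ <+: τ → ¬ isSPR seg σ

/-- The action `act` extending `τ` violates ownership. -/
def violatesOwnership (seg : A) (P : Program D PV DV T n)
    (τ : List (Act A D PV DV T n)) (act : Act A D PV DV T n) : Prop :=
  ∃ t com, act.tc = some (t, com) ∧
    ∃ p : PV,
      (com = .free p ∨ (∃ i q, com = .writeNext p i q) ∨ (∃ x, com = .writeData p x)) ∧
      ∃ a t', (heapOf τ).pval (.var p) = some a ∧ ownedOf seg P τ a = some t' ∧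
        (t' ≠ t ∨ P.pOwner p = none)

/-- The ownership-respecting semantics resmmsem(P): the computations of
mmsem(P) none of whose actions violates ownership. -/
def resmmsem (seg : A) (P : Program D PV DV T n) : Set (List (Act A D PV DV T n)) :=
  {σ | σ ∈ mmsem seg P ∧ ∀ τ act, (τ ++ [act]) <+: σ → ¬ violatesOwnership seg P τ act}

/-- The extension of an address map to pointer expressions. -/
def mapPExp (f : A → A) : PExp A PV n → PExp A PV n
  | .var p => .var p
  | .next a i => .next (f a) i

/-- The extension of an address map to data expressions. -/
def mapDExp (f : A → A) : DExp A DV → DExp A DV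
  | .var x => .var x
  | .data a => .data (f a)

/-- `f` is a heap isomorphism from `h1` to `h2`: a bijection between the
addresses in use whose extension to expressions (with `f seg = seg`) is a
bijection between the domains and is compatible with the valuations. -/
structure IsHeapIso (seg : A) (h1 h2 : Heap A D PV DV n) (f : A → A) : Prop where
  fseg : f seg = seg
  adrBij : Set.BijOn f h1.adr h2.adr
  pdomBij : Set.BijOn (mapPExp f) h1.pdom h2.pdom
  ddomBij : Set.BijOn (mapDExp f) h1.ddom h2.ddom
  pcompat : ∀ pe ∈ h1.pdom, h2.pval (mapPExp f pe) = (h1.pval pe).map f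
  dcompat : ∀ de ∈ h1.ddom, h2.dval (mapDExp f de) = h1.dval de

/-- `h1 ≅ h2`. -/
def HeapIso (seg : A) (h1 h2 : Heap A D PV DV n) : Prop :=
  ∃ f, IsHeapIso seg h1 h2 f

/-- Heap equivalence of computations: same projection to (thread, command)
pairs and isomorphic valid-restricted heaps. -/
def heapEquiv (seg : A) (τ σ : List (Act A D PV DV T n)) : Prop :=
  τ.map Act.tc = σ.map Act.tc ∧
  HeapIso seg ((heapOf τ).restrict (validOf seg τ))
    ((heapOf σ).restrict (validOf seg σ))

/-- The owning pointers after `τ`: valid pointer expressions whose target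
is owned, together with valid next selectors of owned addresses. -/
def ownpOf (seg : A) (P : Program D PV DV T n) (τ : List (Act A D PV DV T n)) :
    Set (PExp A PV n) :=
  {pe | pe ∈ validOf seg τ ∧
    ((∃ a t, (heapOf τ).pval pe = some a ∧ ownedOf seg P τ a = some t)
     ∨ (∃ a i t, pe = PExp.next a i ∧ ownedOf seg P τ a = some t))}

/-- The target and source addresses of a pointer expression in a heap. -/
def exprAdrs (h : Heap A D PV DV n) (pe : PExp A PV n) : Set A :=
  {a | h.pval pe = some a} ∪ {a | PExp.srcAdr pe = some a}

/-- A set of owning pointers is coherent if owning pointers sharing a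
target or source address are included or excluded together. -/
def Coherent (seg : A) (P : Program D PV DV T n) (τ : List (Act A D PV DV T n))
    (O : Set (PExp A PV n)) : Prop :=
  ∀ pe ∈ ownpOf seg P τ, ∀ pe' ∈ ownpOf seg P τ,
    (∃ a, a ∈ exprAdrs (heapOf τ) pe ∧ a ∈ exprAdrs (heapOf τ) pe') →
    (pe ∈ O ↔ pe' ∈ O)

/-- The addresses occurring in a set of pointer expressions. -/
def adrsOfSet (h : Heap A D PV DV n) (O : Set (PExp A PV n)) : Set A :=
  ⋃ pe ∈ O, exprAdrs h pe

/-! Ownership of an address is lost only by publication, and publication is exactly the kind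
of step that would give a foreign variable a valid pointer to it; so an induction along the
semantics shows that foreign variables pointing to owned addresses are invalid. The delicate
step is (Malloc2), which hands a freed address to the allocating thread: it needs the companion
invariant that no valid pointer expression points to a freed address. That invariant holds
because `free(p)` invalidates everything pointing to the freed cell, assignments propagate
invalidity, and a malloc makes valid only expressions pointing to the allocated address or to
`seg`, which is never freed. -/

lemma heapOf_append (τ : List (Act A D PV DV T n)) (act : Act A D PV DV T n) :
    heapOf (τ ++ [act]) = (heapOf τ).apply act.up := by
  simp [heapOf]

lemma validAux_append (seg : A) :
    ∀ (τ : List (Act A D PV DV T n)) (h : Heap A D PV DV n) (V : Set (PExp A PV n))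
      (act : Act A D PV DV T n),
      validAux seg h V (τ ++ [act])
        = validStep seg (τ.foldl (fun h act => h.apply act.up) h) (validAux seg h V τ) act
  | [], _, _, _ => rfl
  | _ :: τ, _, _, act => validAux_append seg τ _ _ act

lemma validOf_append (seg : A) (τ : List (Act A D PV DV T n)) (act : Act A D PV DV T n) :
    validOf seg (τ ++ [act]) = validStep seg (heapOf τ) (validOf seg τ) act :=
  validAux_append seg τ _ _ act

lemma freedAux_append (seg : A) :
    ∀ (τ : List (Act A D PV DV T n)) (h : Heap A D PV DV n) (F : Set A)
      (act : Act A D PV DV T n),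
      freedAux seg h F (τ ++ [act])
        = freedStep seg (τ.foldl (fun h act => h.apply act.up) h) (freedAux seg h F τ) act
  | [], _, _, _ => rfl
  | _ :: τ, _, _, act => freedAux_append seg τ _ _ act

lemma freedOf_append (seg : A) (τ : List (Act A D PV DV T n)) (act : Act A D PV DV T n) :
    freedOf seg (τ ++ [act]) = freedStep seg (heapOf τ) (freedOf seg τ) act :=
  freedAux_append seg τ _ _ act

lemma ownedAux_append (seg : A) (P : Program D PV DV T n) :
    ∀ (τ : List (Act A D PV DV T n)) (h : Heap A D PV DV n) (V : Set (PExp A PV n))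
      (W : A → Option T) (act : Act A D PV DV T n),
      ownedAux seg P h V W (τ ++ [act])
        = ownedStep seg P (τ.foldl (fun h act => h.apply act.up) h)
            (validAux seg h V τ) (ownedAux seg P h V W τ) act
  | [], _, _, _, _ => rfl
  | _ :: τ, _, _, _, act => ownedAux_append seg P τ _ _ _ act

lemma ownedOf_append (seg : A) (P : Program D PV DV T n)
    (τ : List (Act A D PV DV T n)) (act : Act A D PV DV T n) :
    ownedOf seg P (τ ++ [act])
      = ownedStep seg P (heapOf τ) (validOf seg τ) (ownedOf seg P τ) act :=
  ownedAux_append seg P τ _ _ _ act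

lemma Heap.apply_pt_pval (h : Heap A D PV DV n) (pe₀ : PExp A PV n) (b : A)
    (pe : PExp A PV n) :
    (h.apply (Update.pt pe₀ b)).pval pe = if pe = pe₀ then some b else h.pval pe := by
  by_cases hpe : pe = pe₀ <;> simp [Heap.apply, Update.pt, hpe]

lemma Heap.apply_pval_of_pup_eq_none {h : Heap A D PV DV n} {u : Update A D PV DV n}
    {pe : PExp A PV n} (hu : u.pup pe = none) : (h.apply u).pval pe = h.pval pe := by
  simp [Heap.apply, hu]

lemma Heap.apply_pval_of_pup_eq_some {h : Heap A D PV DV n} {u : Update A D PV DV n}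
    {pe : PExp A PV n} {b : A} (hu : u.pup pe = some b) : (h.apply u).pval pe = some b := by
  simp [Heap.apply, hu]

lemma seg_not_mem_freedOf (seg : A) (τ : List (Act A D PV DV T n)) :
    seg ∉ freedOf seg τ := by
  induction τ using List.reverseRecOn with
  | nil => exact id
  | append_singleton τ act ih =>
    rw [freedOf_append]
    unfold freedStep
    split
    · split
      · split_ifs with hseg
        exacts [ih, fun h => (Set.mem_insert_iff.1 h).elim (Ne.symm hseg) ih]
      · exact ih
    · split
      exacts [fun h => ih h.1, ih]
    · exact ih

def NoValidPtr (h : Heap A D PV DV n) (V S : Set (PExp A PV n)) (c : A) : Prop :=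
  ∀ pe ∈ S, h.pval pe = some c → pe ∉ V

def foreignVars (P : Program D PV DV T n) (t : T) : Set (PExp A PV n) :=
  {pe | ∃ q, pe = .var q ∧ P.pOwner q ≠ some t}

section NoValidPtr

variable {h h' : Heap A D PV DV n} {V V' S : Set (PExp A PV n)} {c : A}

lemma NoValidPtr.mono (hno : NoValidPtr h V S c) (hpval : h'.pval = h.pval) (hV : V' ⊆ V) :
    NoValidPtr h' V' S c :=
  fun pe hpe hval hmem => hno pe hpe (hpval ▸ hval) (hV hmem)

lemma NoValidPtr.assign (hno : NoValidPtr h V S c) {pe₀ rhs : PExp A PV n} {b : A}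
    (hrhs : pe₀ ∈ S → b = c → rhs ∉ V) :
    NoValidPtr (h.apply (Update.pt pe₀ b))
      (if rhs ∈ V then insert pe₀ V else V \ {pe₀}) S c := by
  intro pe hpe hval hmem
  rw [Heap.apply_pt_pval] at hval
  split_ifs at hval hmem with h₀ hr
  · exact hrhs (h₀ ▸ hpe) (Option.some.inj hval) hr
  · exact hmem.2 h₀
  · exact hno pe hpe hval (hmem.resolve_left h₀)
  · exact hno pe hpe hval hmem.1

end NoValidPtr

/-- The common shape of the updates of rules (Malloc1) and (Malloc2). -/
def IsMallocUpdate (seg : A) (p : PV) (a : A) (u : Update A D PV DV n) : Prop :=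
  u.pup (.var p) = some a ∧
    ∀ pe b, u.pup pe = some b → pe = .var p ∧ b = a ∨ (∃ i, pe = .next a i) ∧ b = seg

lemma isMallocUpdate_mallocUpdate (seg : A) (p : PV) (a : A) (d : D) :
    IsMallocUpdate seg p a (mallocUpdate seg p a d : Update A D PV DV n) := by
  refine ⟨by simp [mallocUpdate], fun pe b hb => ?_⟩
  simp only [mallocUpdate] at hb
  split_ifs at hb with h₁ h₂
  · exact .inl ⟨h₁, (Option.some.inj hb).symm⟩
  · exact .inr ⟨h₂, (Option.some.inj hb).symm⟩

lemma isMallocUpdate_pt (seg : A) (p : PV) (a : A) :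
    IsMallocUpdate seg p a (Update.pt (.var p) a : Update A D PV DV n) := by
  refine ⟨by simp [Update.pt], fun pe b hb => ?_⟩
  simp only [Update.pt] at hb
  split_ifs at hb with h₁
  exact .inl ⟨h₁, (Option.some.inj hb).symm⟩

section Steps

variable {seg : A} {P : Program D PV DV T n} {h : Heap A D PV DV n} {V : Set (PExp A PV n)}
  {W : A → Option T} {p : PV} {a : A} {u : Update A D PV DV n} {t₀ : T}

lemma freedStep_malloc (hu : IsMallocUpdate seg p a u) (F : Set A) :
    freedStep seg h F ⟨some (t₀, .malloc p), u⟩ = F \ {a} := by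
  simp [freedStep, hu.1]

lemma ownedStep_malloc (hu : IsMallocUpdate seg p a u) (c : A) :
    ownedStep seg P h V W ⟨some (t₀, .malloc p), u⟩ c
      = if c = a then (if P.pOwner p = some t₀ then some t₀ else none) else W c := by
  simp [ownedStep, hu.1]

lemma IsMallocUpdate.valid_pval (hu : IsMallocUpdate seg p a u) {pe : PExp A PV n} {c : A}
    (hval : (h.apply u).pval pe = some c)
    (hmem : pe ∈ validStep seg h V ⟨some (t₀, .malloc p), u⟩) :
    pe = .var p ∧ c = a ∨ (∃ i, pe = .next a i) ∧ c = seg ∨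
      h.pval pe = some c ∧ pe ∈ V := by
  rcases hup : u.pup pe with _ | b
  · rw [Heap.apply_pval_of_pup_eq_none hup] at hval
    refine .inr (.inr ⟨hval, ?_⟩)
    simp only [validStep, hu.1] at hmem
    rcases hmem with (rfl | hmem) | ⟨i, rfl, hi⟩
    · simp [hu.1] at hup
    · exact hmem
    · exact absurd hup hi
  · rw [Heap.apply_pval_of_pup_eq_some hup] at hval
    obtain rfl := Option.some.inj hval
    exact (hu.2 pe b hup).elim .inl (.inr ∘ .inl)

lemma IsMallocUpdate.noValidPtr_freedStep (hu : IsMallocUpdate seg p a u) {F : Set A}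
    (hF : ∀ c ∈ F, NoValidPtr h V Set.univ c) (hseg : seg ∉ F) :
    ∀ c ∈ freedStep seg h F ⟨some (t₀, .malloc p), u⟩,
      NoValidPtr (h.apply u) (validStep seg h V ⟨some (t₀, .malloc p), u⟩) Set.univ c := by
  rw [freedStep_malloc hu]
  rintro c ⟨hc, hca⟩ pe - hval hmem
  rcases hu.valid_pval hval hmem with ⟨-, rfl⟩ | ⟨-, rfl⟩ | ⟨hval, hmem⟩
  · exact hca rfl
  · exact hseg hc
  · exact hF c hc pe trivial hval hmem

lemma IsMallocUpdate.noValidPtr_ownedStep (hu : IsMallocUpdate seg p a u)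
    (hW : ∀ c t, W c = some t → NoValidPtr h V (foreignVars P t) c)
    (ha : NoValidPtr h V Set.univ a) :
    ∀ c t, ownedStep seg P h V W ⟨some (t₀, .malloc p), u⟩ c = some t →
      NoValidPtr (h.apply u) (validStep seg h V ⟨some (t₀, .malloc p), u⟩)
        (foreignVars P t) c := by
  rintro c t hc _ ⟨q, rfl, hq⟩ hval hmem
  rw [ownedStep_malloc hu] at hc
  rcases hu.valid_pval hval hmem with ⟨hqp, rfl⟩ | ⟨⟨i, hi⟩, -⟩ | ⟨hval, hmem⟩
  · cases hqp
    simp only [if_true] at hc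
    split_ifs at hc with hp
    exact hq (Option.some.inj hc ▸ hp)
  · cases hi
  · split_ifs at hc with hca
    · exact ha _ trivial (hca ▸ hval) hmem
    · exact hW c t hc _ ⟨q, rfl, hq⟩ hval hmem

lemma ownedStep_eq_some {act : Act A D PV DV T n} (hact : ∀ t p, act.tc ≠ some (t, .malloc p))
    {c : A} {t : T} (hc : ownedStep seg P h V W act c = some t) : W c = some t := by
  unfold ownedStep at hc
  split at hc
  next heq => exact absurd heq (hact _ _)
  · split at hc
    · exact (Option.ite_none_left_eq_some.1 hc).2
    · exact hc
  · exact (Option.ite_none_left_eq_some.1 hc).2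
  · exact hc

lemma validStep_free_subset (u : Update A D PV DV n) :
    validStep seg h V ⟨some (t₀, .free p), u⟩ ⊆ V := by
  simp only [validStep]
  split
  · split_ifs
    exacts [subset_rfl, Set.sdiff_subset]
  · exact subset_rfl

lemma noValidPtr_ownedStep_assign {com : Com D PV DV n} {pe₀ rhs : PExp A PV n} {b : A}
    (hW : ∀ c t, W c = some t → NoValidPtr h V (foreignVars P t) c)
    (hpub : ∀ c t, W c = some t → pe₀ ∈ foreignVars P t → b = c → rhs ∈ V →
      publishedBy P h V W com c) :
    ∀ c t, (if publishedBy P h V W com c then none else W c) = some t →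
      NoValidPtr (h.apply (Update.pt pe₀ b))
        (if rhs ∈ V then insert pe₀ V else V \ {pe₀}) (foreignVars P t) c := by
  intro c t hc
  split_ifs at hc with hnpub
  exact (hW c t hc).assign fun hpe₀ hbc hrhs => hnpub (hpub c t hc hpe₀ hbc hrhs)

end Steps

theorem Sem.noValidPtr_of_mem_freedOf {seg : A} {P : Program D PV DV T n} {mm : Bool}
    {τ : List (Act A D PV DV T n)} {ctrl : T → P.Ctrl} (hs : Sem seg P mm τ ctrl) :
    ∀ c ∈ freedOf seg τ, NoValidPtr (heapOf τ) (validOf seg τ) Set.univ c := by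
  induction hs with
  | base => simp [freedOf, freedAux, freedStep]
  | assert _ _ _ _ _ _ ih | readData _ _ _ _ _ _ _ _ _ _ _ ih
  | writeData _ _ _ _ _ _ _ _ _ _ _ ih | opAsgn _ _ _ _ _ _ _ _ _ ih =>
    rw [heapOf_append, validOf_append, freedOf_append]
    simp only [validStep, freedStep]
    exact fun c hc => (ih c hc).mono rfl subset_rfl
  | @free τ _ _ p _ _ _ ih =>
    rw [heapOf_append, validOf_append, freedOf_append]
    simp only [validStep, freedStep]
    rcases (heapOf τ).pval (.var p) with _ | a
    · exact ih
    dsimp only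
    split_ifs with hseg
    · exact ih
    rintro c (rfl | hc)
    · exact fun pe _ hval hmem => hmem.2 (.inl hval)
    · exact (ih c hc).mono rfl Set.sdiff_subset
  | copyP _ _ _ _ _ _ _ hq ih =>
    rw [heapOf_append, validOf_append, freedOf_append]
    simp only [validStep, freedStep]
    exact fun c hc => (ih c hc).assign fun _ hbc => ih c hc _ trivial (hbc ▸ hq)
  | readNext _ _ _ _ _ _ _ _ _ hq _ hnext ih =>
    rw [heapOf_append, validOf_append, freedOf_append]
    simp only [validStep, freedStep, hq]
    exact fun c hc => (ih c hc).assign fun _ hbc => ih c hc _ trivial (hbc ▸ hnext)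
  | writeNext _ _ _ _ _ _ _ _ _ hp _ hq ih =>
    rw [heapOf_append, validOf_append, freedOf_append]
    simp only [validStep, freedStep, hp]
    exact fun c hc => (ih c hc).assign fun _ hbc => ih c hc _ trivial (hbc ▸ hq)
  | @malloc1 τ _ _ p _ a d _ _ _ ih =>
    rw [heapOf_append, validOf_append, freedOf_append]
    exact (isMallocUpdate_mallocUpdate seg p a d).noValidPtr_freedStep ih
      (seg_not_mem_freedOf seg τ)
  | @malloc2 τ _ _ p _ a _ _ _ _ ih =>
    rw [heapOf_append, validOf_append, freedOf_append]
    exact (isMallocUpdate_pt seg p a).noValidPtr_freedStep ih (seg_not_mem_freedOf seg τ)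

theorem Sem.noValidPtr_of_ownedOf {seg : A} {P : Program D PV DV T n} {mm : Bool}
    {τ : List (Act A D PV DV T n)} {ctrl : T → P.Ctrl} (hs : Sem seg P mm τ ctrl) :
    ∀ c t, ownedOf seg P τ c = some t →
      NoValidPtr (heapOf τ) (validOf seg τ) (foreignVars P t) c := by
  induction hs with
  | base => simp [ownedOf, ownedAux, ownedStep]
  | assert _ _ _ _ _ _ ih | readData _ _ _ _ _ _ _ _ _ _ _ ih
  | writeData _ _ _ _ _ _ _ _ _ _ _ ih | opAsgn _ _ _ _ _ _ _ _ _ ih =>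
    rw [heapOf_append, validOf_append, ownedOf_append]
    simp only [validStep]
    exact fun c t hc => (ih c t (ownedStep_eq_some (by simp) hc)).mono rfl subset_rfl
  | free _ _ _ _ _ ih =>
    rw [heapOf_append, validOf_append, ownedOf_append]
    exact fun c t hc =>
      (ih c t (ownedStep_eq_some (by simp) hc)).mono rfl (validStep_free_subset _)
  | copyP _ p q _ _ _ _ hq ih =>
    rw [heapOf_append, validOf_append, ownedOf_append]
    simp only [validStep, ownedStep]
    refine noValidPtr_ownedStep_assign ih ?_
    rintro c t hc ⟨_, hp, hforeign⟩ rfl hr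
    cases hp
    exact ⟨t, hc, .inl ⟨p, q, rfl, hr, hq, hforeign⟩⟩
  | readNext _ p q i _ a _ _ _ hq _ hnext ih =>
    rw [heapOf_append, validOf_append, ownedOf_append]
    simp only [validStep, ownedStep, hq]
    refine noValidPtr_ownedStep_assign ih ?_
    rintro c t hc ⟨_, hp, hforeign⟩ rfl hr
    cases hp
    exact ⟨t, hc, .inr (.inl ⟨p, q, i, a, rfl, hq, hr, hnext, hforeign⟩)⟩
  | writeNext _ _ _ _ _ _ _ _ _ hp _ _ ih =>
    rw [heapOf_append, validOf_append, ownedOf_append]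
    simp only [validStep, ownedStep, hp]
    refine noValidPtr_ownedStep_assign ih ?_
    rintro c t hc ⟨_, hnext, -⟩
    cases hnext
  | malloc1 _ p _ a d _ _ hfresh ih =>
    rw [heapOf_append, validOf_append, ownedOf_append]
    exact (isMallocUpdate_mallocUpdate seg p a d).noValidPtr_ownedStep ih
      fun pe _ hval _ => hfresh (.inr (.inl ⟨pe, hval⟩))
  | malloc2 _ p _ a _ hs _ ha ih =>
    rw [heapOf_append, validOf_append, ownedOf_append]
    exact (isMallocUpdate_pt seg p a).noValidPtr_ownedStep ih (hs.noValidPtr_of_mem_freedOf a ha)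

/-- a shared pointer variable, or a pointer variable of
another thread, that points to an address owned by thread `t` is invalid. -/
theorem owned_implies_invalid (seg : A) (P : Program D PV DV T n)
    (τ : List (Act A D PV DV T n)) (hτ : τ ∈ mmsem seg P)
    (p : PV) (a : A) (t : T)
    (hp : (heapOf τ).pval (PExp.var p) = some a)
    (hown : ownedOf seg P τ a = some t)
    (hvar : P.pOwner p = none ∨ ∃ t', P.pOwner p = some t' ∧ t' ≠ t) :
    PExp.var p ∉ validOf seg τ := by
  obtain ⟨ctrl, hs⟩ := hτ
  have hforeign : P.pOwner p ≠ some t := by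
    rcases hvar with hnone | ⟨t', hsome, ht'⟩
    · simp [hnone]
    · simpa [hsome] using ht'
  exact hs.noValidPtr_of_ownedOf a t hown _ ⟨p, rfl, hforeign⟩ hp

end

end PRF
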